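/- Let T > 0 and let w : [0,∞) → ℝ be positive, non-increasing, with w(0)=1 and satisfying the semigroup condition w(s) ≥ w(s−t)w(t). Let K : [0,∞) → ℝ be measurable with ∫₀^∞ |K(τ)|² w(τ)⁻¹ dτ ≤ γ². Then the Volterra operator (Sf)(τ) = ∫_τ^T K(ρ−τ) f(ρ) dρ on L²((0,T), w(τ)dτ) is Hilbert–Schmidt with Hilbert–Schmidt norm at most γ√T, and hence compact. -/

import Mathlib

open MeasureTheory Set

/-!
The semigroup inequality `w (ρ - τ) * w τ ≤ w ρ` gives
`K (ρ - τ)² (w ρ)⁻¹ w τ ≤ K (ρ - τ)² (w (ρ - τ))⁻¹`, so after the shift `u = ρ - τ` every row `τ`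
of the squared kernel has weighted mass at most `∫₀^∞ K² w⁻¹ ≤ γ²`; integrating over
`τ ∈ (0, T]` bounds the squared Hilbert–Schmidt norm by `γ² T`.
-/

lemma setIntegral_le_mul_measureReal_of_le {α : Type*} [MeasurableSpace α] {μ : Measure α}
    {s : Set α} {f : α → ℝ} {C : ℝ} (hs : MeasurableSet s) (hμs : μ s < ⊤)
    (hf_nonneg : ∀ x ∈ s, 0 ≤ f x) (hf_le : ∀ x ∈ s, f x ≤ C) :
    ∫ x in s, f x ∂μ ≤ C * μ.real s := by
  calc ∫ x in s, f x ∂μ ≤ ∫ _ in s, C ∂μ :=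
        integral_mono_of_nonneg (ae_restrict_of_forall_mem hs hf_nonneg)
          (integrableOn_const hμs.ne) (ae_restrict_of_forall_mem hs hf_le)
    _ = C * μ.real s := by rw [setIntegral_const, smul_eq_mul, mul_comm]

lemma MeasureTheory.IntegrableOn.comp_sub_right_Ioi {E : Type*} [NormedAddCommGroup E]
    {g : ℝ → E} {a : ℝ} (hg : IntegrableOn g (Ioi a)) (τ : ℝ) :
    IntegrableOn (fun ρ => g (ρ - τ)) (Ioi (a + τ)) := by
  rw [← preimage_sub_const_Ioi]
  exact ((measurePreserving_sub_right volume τ).integrableOn_comp_preimage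
    (measurableEmbedding_subRight τ)).2 hg

lemma setIntegral_Ioi_comp_sub_right {E : Type*} [NormedAddCommGroup E] [NormedSpace ℝ E]
    (g : ℝ → E) (a τ : ℝ) :
    ∫ ρ in Ioi (a + τ), g (ρ - τ) = ∫ u in Ioi a, g u := by
  rw [← preimage_sub_const_Ioi]
  exact (measurePreserving_sub_right volume τ).setIntegral_preimage_emb
    (measurableEmbedding_subRight τ) g _

lemma setIntegral_Ioc_comp_sub_right_le {g : ℝ → ℝ} (hg : IntegrableOn g (Ioi 0))
    (hg_nonneg : ∀ u ∈ Ioi (0 : ℝ), 0 ≤ g u) (τ T : ℝ) :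
    ∫ ρ in Ioc τ T, g (ρ - τ) ≤ ∫ u in Ioi 0, g u := by
  have hgτ := hg.comp_sub_right_Ioi τ
  rw [zero_add] at hgτ
  calc ∫ ρ in Ioc τ T, g (ρ - τ) ≤ ∫ ρ in Ioi τ, g (ρ - τ) := by
        refine setIntegral_mono_set hgτ ?_ Ioc_subset_Ioi_self.eventuallyLE
        filter_upwards [ae_restrict_mem measurableSet_Ioi] with ρ hρ
        exact hg_nonneg _ (mem_Ioi.2 (sub_pos.2 hρ))
    _ = ∫ u in Ioi 0, g u := by
        simpa only [zero_add] using setIntegral_Ioi_comp_sub_right g 0 τ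

lemma inv_weight_mul_weight_le_inv_weight_sub {w : ℝ → ℝ} (hw_pos : ∀ τ, 0 ≤ τ → 0 < w τ)
    (hw_semi : ∀ t s : ℝ, 0 ≤ t → t ≤ s → w (s - t) * w t ≤ w s) {t s : ℝ} (ht : 0 ≤ t)
    (hts : t ≤ s) : (w s)⁻¹ * w t ≤ (w (s - t))⁻¹ := by
  rw [inv_mul_le_iff₀ (hw_pos s (ht.trans hts)), le_mul_inv_iff₀ (hw_pos _ (sub_nonneg.2 hts)),
    mul_comm]
  exact hw_semi t s ht hts

lemma setIntegral_Ioc_sq_mul_inv_weight_mul_weight_le {w K : ℝ → ℝ}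
    (hw_pos : ∀ τ, 0 ≤ τ → 0 < w τ)
    (hw_semi : ∀ t s : ℝ, 0 ≤ t → t ≤ s → w (s - t) * w t ≤ w s)
    (hint : IntegrableOn (fun τ => (K τ) ^ 2 * (w τ)⁻¹) (Ioi 0)) {τ : ℝ} (hτ : 0 ≤ τ) (T : ℝ) :
    (∫ ρ in Ioc τ T, (K (ρ - τ)) ^ 2 * (w ρ)⁻¹) * w τ ≤ ∫ u in Ioi 0, (K u) ^ 2 * (w u)⁻¹ := by
  have hshift := hint.comp_sub_right_Ioi τ
  rw [zero_add] at hshift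
  rw [← integral_mul_const]
  refine (integral_mono_of_nonneg ?_ (hshift.mono_set Ioc_subset_Ioi_self) ?_).trans
    (setIntegral_Ioc_comp_sub_right_le hint ?_ τ T)
  · filter_upwards [ae_restrict_mem measurableSet_Ioc] with ρ hρ
    have := hw_pos ρ (hτ.trans hρ.1.le)
    have := hw_pos τ hτ
    positivity
  · filter_upwards [ae_restrict_mem measurableSet_Ioc] with ρ hρ
    rw [mul_assoc]
    exact mul_le_mul_of_nonneg_left
      (inv_weight_mul_weight_le_inv_weight_sub hw_pos hw_semi hτ hρ.1.le) (sq_nonneg _)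
  · intro u hu
    have := hw_pos u (le_of_lt hu)
    positivity

theorem volterra_hilbert_schmidt_bound_general (T γ : ℝ) (hγ : 0 ≤ γ)
    (w K : ℝ → ℝ)
    (hw_pos : ∀ τ, 0 ≤ τ → 0 < w τ)
    (hw_semi : ∀ t s : ℝ, 0 ≤ t → t ≤ s → w (s - t) * w t ≤ w s)
    (hint : IntegrableOn (fun τ => (K τ) ^ 2 * (w τ)⁻¹) (Ioi 0))
    (hKL2 : ∫ τ in Ioi (0:ℝ), (K τ) ^ 2 * (w τ)⁻¹ ≤ γ ^ 2) :
    Real.sqrt (∫ τ in Ioc (0:ℝ) T,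
        (∫ ρ in Ioc τ T, (K (ρ - τ)) ^ 2 * (w ρ)⁻¹) * w τ)
      ≤ γ * Real.sqrt T := by
  have hrow_nonneg :
      ∀ τ ∈ Ioc (0 : ℝ) T, 0 ≤ (∫ ρ in Ioc τ T, (K (ρ - τ)) ^ 2 * (w ρ)⁻¹) * w τ := by
    intro τ hτ
    refine mul_nonneg (setIntegral_nonneg measurableSet_Ioc fun ρ hρ => ?_) (hw_pos τ hτ.1.le).le
    have := hw_pos ρ (hτ.1.trans hρ.1).le
    positivity
  have hrow_le :
      ∀ τ ∈ Ioc (0 : ℝ) T, (∫ ρ in Ioc τ T, (K (ρ - τ)) ^ 2 * (w ρ)⁻¹) * w τ ≤ γ ^ 2 :=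
    fun τ hτ => (setIntegral_Ioc_sq_mul_inv_weight_mul_weight_le hw_pos hw_semi hint
      hτ.1.le T).trans hKL2
  have hsqrt_max : Real.sqrt (max T 0) = Real.sqrt T := by
    rcases le_total T 0 with hT | hT
    · simp [hT, Real.sqrt_eq_zero_of_nonpos]
    · simp [hT]
  calc _ ≤ Real.sqrt (γ ^ 2 * max T 0) := by
        refine Real.sqrt_le_sqrt ?_
        simpa only [Real.volume_real_Ioc, sub_zero] using setIntegral_le_mul_measureReal_of_le
          measurableSet_Ioc (measure_Ioc_lt_top (μ := volume)) hrow_nonneg hrow_le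
    _ = γ * Real.sqrt T := by rw [Real.sqrt_mul (sq_nonneg γ), Real.sqrt_sq hγ, hsqrt_max]

/-- Hilbert–Schmidt property of the Volterra history operator
`(Sf)(τ) = ∫_τ^T K(ρ−τ) f(ρ) dρ` on `L²((0,T), w(τ)dτ)`: writing the operator with
kernel `k(τ,ρ) = K(ρ−τ)1_{ρ≥τ} w(ρ)⁻¹`, its Hilbert–Schmidt norm
`(∫₀^T (∫_τ^T K(ρ−τ)² w(ρ)⁻¹ dρ) w(τ) dτ)^{1/2}` is at most `γ√T` whenever
`∫₀^∞ K(τ)² w(τ)⁻¹ dτ ≤ γ²`. -/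
theorem volterra_hilbert_schmidt_bound (T γ : ℝ) (hT : 0 < T) (hγ : 0 ≤ γ)
    (w K : ℝ → ℝ)
    (hw_pos : ∀ τ, 0 ≤ τ → 0 < w τ)
    (hw_mono : ∀ t s : ℝ, 0 ≤ t → t ≤ s → w s ≤ w t)
    (hw0 : w 0 = 1)
    (hw_semi : ∀ t s : ℝ, 0 ≤ t → t ≤ s → w (s - t) * w t ≤ w s)
    (hKmeas : Measurable K) (hwmeas : Measurable w)
    (hint : IntegrableOn (fun τ => (K τ) ^ 2 * (w τ)⁻¹) (Ioi 0))
    (hKL2 : ∫ τ in Ioi (0:ℝ), (K τ) ^ 2 * (w τ)⁻¹ ≤ γ ^ 2) :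
    Real.sqrt (∫ τ in Ioc (0:ℝ) T,
        (∫ ρ in Ioc τ T, (K (ρ - τ)) ^ 2 * (w ρ)⁻¹) * w τ)
      ≤ γ * Real.sqrt T :=
  volterra_hilbert_schmidt_bound_general T γ hγ w K hw_pos hw_semi hint hKL2
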